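/- arXiv:2509.06694 — 3 statements merged into one kernel-verified Lean document; each statement's English description precedes it below -/
import Mathlib

section
/- Let g : ℝ^d → ℝ, let σ be a d-simplex with affinely independent vertices v₀,…,v_d ∈ ℝ^d, and let (t₀,…,t_d) be the barycentric coordinates of p ∈ ℝ^d with respect to σ. Define BNN_σ(t₀,…,t_d) = ∑ᵢ ReLU(1 - ReLU(1-tᵢ) - ∑ⱼ (step*(-tⱼ) + step*(tⱼ-1))) · g(vᵢ). If p lies in the convex hull of the vertices (i.e., all tᵢ ∈ [0,1]), then BNN_σ(t₀,…,t_d) = ∑ᵢ tᵢ · g(vᵢ). -/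
/-- If all barycentric coordinates lie in `[0,1]` (i.e. `p` is in the convex
hull of the vertices), then `BNN_σ` equals the barycentric interpolation. -/
theorem stmt6 (d : ℕ) (g : (Fin d → ℝ) → ℝ) (v : Fin (d + 1) → (Fin d → ℝ))
    (hv : AffineIndependent ℝ v) (p : Fin d → ℝ) (t : Fin (d + 1) → ℝ)
    (hsum : (∑ i, t i) = 1) (hp : (∑ i, t i • v i) = p)
    (hmem : ∀ i, t i ∈ Set.Icc (0 : ℝ) 1) :
    let stepStar : ℝ → ℝ := fun s => if 0 < s then 1 else 0
    let relu : ℝ → ℝ := fun s => max 0 s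
    (∑ i, relu (1 - relu (1 - t i)
        - ∑ j, (stepStar (-t j) + stepStar (t j - 1))) * g (v i))
      = ∑ i, t i * g (v i) := by
  intro stepStar relu
  apply Finset.sum_congr rfl
  intro i _
  obtain ⟨h0, h1⟩ := hmem i
  have hz : (∑ j, (stepStar (-t j) + stepStar (t j - 1))) = 0 := by
    apply Finset.sum_eq_zero
    intro j _
    obtain ⟨hj0, hj1⟩ := hmem j
    simp only [stepStar]
    rw [if_neg (by linarith), if_neg (by linarith)]
    ring
  rw [hz]
  have : relu (1 - t i) = 1 - t i := max_eq_right (by linarith)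
  rw [this]
  have : relu (1 - (1 - t i) - 0) = t i := by
    simp only [relu]
    rw [max_eq_right (by linarith)]
    ring
  rw [this]
end

section
/- With BNN_σ defined as BNN_σ(t₀,…,t_d) = ∑ᵢ ReLU(1 - ReLU(1-tᵢ) - ∑ⱼ (step*(-tⱼ) + step*(tⱼ-1))) · g(vᵢ): if some coordinate tⱼ satisfies tⱼ < 0 or tⱼ > 1 (equivalently, p lies outside the convex hull of the simplex), then BNN_σ(t₀,…,t_d) = 0. -/
/-- If some barycentric coordinate lies outside `[0,1]` (i.e. `p` is outside
the convex hull of the simplex), then `BNN_σ` evaluates to `0`. -/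
theorem stmt7 (d : ℕ) (g : (Fin d → ℝ) → ℝ) (v : Fin (d + 1) → (Fin d → ℝ))
    (hv : AffineIndependent ℝ v) (p : Fin d → ℝ) (t : Fin (d + 1) → ℝ)
    (hsum : (∑ i, t i) = 1) (hp : (∑ i, t i • v i) = p)
    (hout : ∃ j, t j < 0 ∨ 1 < t j) :
    let stepStar : ℝ → ℝ := fun s => if 0 < s then 1 else 0
    let relu : ℝ → ℝ := fun s => max 0 s
    (∑ i, relu (1 - relu (1 - t i)
        - ∑ j, (stepStar (-t j) + stepStar (t j - 1))) * g (v i)) = 0 := by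
  intro stepStar relu
  obtain ⟨j, hj⟩ := hout
  have hS : (1 : ℝ) ≤ ∑ j, (stepStar (-t j) + stepStar (t j - 1)) := by
    have hjterm : (1 : ℝ) ≤ stepStar (-t j) + stepStar (t j - 1) := by
      rcases hj with h | h
      · simp only [stepStar]
        rw [if_pos (by linarith)]
        have : (0 : ℝ) ≤ if 0 < t j - 1 then (1:ℝ) else 0 := by positivity
        linarith
      · simp only [stepStar]
        rw [if_pos (by linarith : (0:ℝ) < t j - 1)]
        have : (0 : ℝ) ≤ if 0 < -t j then (1:ℝ) else 0 := by positivity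
        linarith
    calc (1:ℝ) ≤ stepStar (-t j) + stepStar (t j - 1) := hjterm
      _ ≤ _ := Finset.single_le_sum (f := fun k => stepStar (-t k) + stepStar (t k - 1))
          (fun k _ => by positivity) (Finset.mem_univ j)
  apply Finset.sum_eq_zero
  intro i _
  have h0 : relu (1 - relu (1 - t i) - ∑ j, (stepStar (-t j) + stepStar (t j - 1))) = 0 := by
    simp only [relu]
    have h1 : (0:ℝ) ≤ max 0 (1 - t i) := le_max_left _ _
    have : 1 - max 0 (1 - t i) - ∑ j, (stepStar (-t j) + stepStar (t j - 1)) ≤ 0 := by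
      linarith
    exact max_eq_left this
  rw [h0, zero_mul]
end

section
/- Let σ₁ and σ₂ be two d-simplices of a simplicial complex whose convex hulls intersect, and let g be a function on the vertices. If p lies in |σ₁| ∩ |σ₂|, then the barycentric interpolations agree: ∑ᵢ tᵢ¹ g(vᵢ¹) = ∑ᵢ tᵢ² g(vᵢ²), where (tᵢᵏ) are the barycentric coordinates of p with respect to σₖ. (In a simplicial complex, |σ₁| ∩ |σ₂| is the convex hull of a common face, on which the barycentric coordinates of p with respect to σ₁ and σ₂ are supported and coincide.) -/
open Finset

/-- Reindex a sum over a finset of points inside the range of an injective map. -/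
lemma sum_subset_range {n : ℕ} {E : Type*} [DecidableEq E] (M : Type*) [AddCommMonoid M]
    (v : Fin n → E) (hv : Function.Injective v) (T : Finset E) (hT : ↑T ⊆ Set.range v)
    (f : E → M) :
    ∑ y ∈ T, f y = ∑ i, if v i ∈ T then f (v i) else 0 := by
  rw [← Finset.sum_filter]
  exact (Finset.sum_bij (fun i (_ : i ∈ univ.filter (fun i => v i ∈ T)) => v i)
    (fun a ha => (Finset.mem_filter.mp ha).2)
    (fun a _ b _ h => hv h)
    (fun y hy => by
      obtain ⟨i, rfl⟩ := hT hy
      exact ⟨i, Finset.mem_filter.mpr ⟨Finset.mem_univ i, hy⟩, rfl⟩)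
    (fun i _ => rfl)).symm

/-- If two simplices of a simplicial complex intersect in the convex hull of
their common vertices, then the barycentric interpolations of a function `g`
agree on the intersection. -/
theorem stmt10 (d : ℕ) (v1 v2 : Fin (d + 1) → (Fin d → ℝ))
    (h1 : AffineIndependent ℝ v1) (h2 : AffineIndependent ℝ v2)
    (hface : convexHull ℝ (Set.range v1) ∩ convexHull ℝ (Set.range v2)
      = convexHull ℝ (Set.range v1 ∩ Set.range v2))
    (g : (Fin d → ℝ) → ℝ) (p : Fin d → ℝ)
    (hp : p ∈ convexHull ℝ (Set.range v1) ∩ convexHull ℝ (Set.range v2))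
    (t1 t2 : Fin (d + 1) → ℝ)
    (ht1pos : ∀ i, 0 ≤ t1 i) (ht1sum : (∑ i, t1 i) = 1)
    (ht1p : (∑ i, t1 i • v1 i) = p)
    (ht2pos : ∀ i, 0 ≤ t2 i) (ht2sum : (∑ i, t2 i) = 1)
    (ht2p : (∑ i, t2 i • v2 i) = p) :
    (∑ i, t1 i * g (v1 i)) = ∑ i, t2 i * g (v2 i) := by
  classical
  have hv1 : Function.Injective v1 := h1.injective
  have hv2 : Function.Injective v2 := h2.injective
  have hS : (Set.range v1 ∩ Set.range v2).Finite :=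
    (Set.finite_range v1).inter_of_left _
  have hp' : p ∈ convexHull ℝ (Set.range v1 ∩ Set.range v2) := hface ▸ hp
  rw [← hS.coe_toFinset, Finset.mem_convexHull'] at hp'
  obtain ⟨w, hw0, hwsum, hwp⟩ := hp'
  set T := hS.toFinset with hTdef
  have hT1 : ↑T ⊆ Set.range v1 := by
    rw [hS.coe_toFinset]; exact Set.inter_subset_left
  have hT2 : ↑T ⊆ Set.range v2 := by
    rw [hS.coe_toFinset]; exact Set.inter_subset_right
  set c1 : Fin (d + 1) → ℝ := fun i => if v1 i ∈ T then w (v1 i) else 0 with hc1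
  set c2 : Fin (d + 1) → ℝ := fun i => if v2 i ∈ T then w (v2 i) else 0 with hc2
  have hc1sum : ∑ i, c1 i = 1 := by
    rw [hc1, ← sum_subset_range ℝ v1 hv1 T hT1 w]; exact hwsum
  have hc2sum : ∑ i, c2 i = 1 := by
    rw [hc2, ← sum_subset_range ℝ v2 hv2 T hT2 w]; exact hwsum
  have hc1p : ∑ i, c1 i • v1 i = p := by
    rw [← hwp, sum_subset_range (Fin d → ℝ) v1 hv1 T hT1 (fun y => w y • y)]
    refine Finset.sum_congr rfl fun i _ => ?_
    by_cases h : v1 i ∈ T <;> simp [hc1, h]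
  have hc2p : ∑ i, c2 i • v2 i = p := by
    rw [← hwp, sum_subset_range (Fin d → ℝ) v2 hv2 T hT2 (fun y => w y • y)]
    refine Finset.sum_congr rfl fun i _ => ?_
    by_cases h : v2 i ∈ T <;> simp [hc2, h]
  have key : ∀ (v : Fin (d+1) → (Fin d → ℝ)), AffineIndependent ℝ v →
      ∀ a b : Fin (d+1) → ℝ, ∑ i, a i = 1 → ∑ i, b i = 1 →
      ∑ i, a i • v i = ∑ i, b i • v i → a = b := by
    intro v hv a b ha hb hab
    refine (affineIndependent_iff_eq_of_fintype_affineCombination_eq ℝ v).mp hv a b ha hb ?_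
    rw [Finset.univ.affineCombination_eq_linear_combination v a ha,
      Finset.univ.affineCombination_eq_linear_combination v b hb]
    exact hab
  have ht1c : t1 = c1 := key v1 h1 t1 c1 ht1sum hc1sum (by rw [ht1p, hc1p])
  have ht2c : t2 = c2 := key v2 h2 t2 c2 ht2sum hc2sum (by rw [ht2p, hc2p])
  rw [ht1c, ht2c]
  calc ∑ i, c1 i * g (v1 i)
      = ∑ i, if v1 i ∈ T then w (v1 i) * g (v1 i) else 0 := by
        refine Finset.sum_congr rfl fun i _ => ?_
        by_cases h : v1 i ∈ T <;> simp [hc1, h]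
    _ = ∑ y ∈ T, w y * g y := (sum_subset_range ℝ v1 hv1 T hT1 (fun y => w y * g y)).symm
    _ = ∑ i, if v2 i ∈ T then w (v2 i) * g (v2 i) else 0 :=
        sum_subset_range ℝ v2 hv2 T hT2 (fun y => w y * g y)
    _ = ∑ i, c2 i * g (v2 i) := by
        refine Finset.sum_congr rfl fun i _ => ?_
        by_cases h : v2 i ∈ T <;> simp [hc2, h]
end
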